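/- Suppose the summands of an absolutely monotonic power series I(x) concentrate exponentially near n ≈ f(x) with window term C x^{-ν} and parameters (α, β). Then for any subpolynomial sequence {b_n} and any α' ∈ (0, α), as x → +∞, (1/I(x)) Σ_{n=0}^{n_-(x)} b_n a_n x^n = O(e^{-α' x^β}) and (1/I(x)) Σ_{n=n_+(x)}^{∞} b_n a_n x^n = O(e^{-α' x^β}). -/

import Mathlib

open Filter Asymptotics Polynomial

noncomputable def Iser (a : ℕ → ℝ) (x : ℝ) : ℝ := ∑' n : ℕ, a n * x ^ n

noncomputable def sumLE (a : ℕ → ℝ) (x y : ℝ) : ℝ :=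
  ∑' n : ℕ, if (n : ℤ) ≤ ⌊y⌋ then a n * x ^ n else 0

noncomputable def sumGE (a : ℕ → ℝ) (x y : ℝ) : ℝ :=
  ∑' n : ℕ, if ⌊y⌋ ≤ (n : ℤ) then a n * x ^ n else 0

/-- `I(x) = Σ aₙ xⁿ` is absolutely monotonic: all coefficients are nonnegative and
the series converges for every `x > 0`. -/
def AbsMono (a : ℕ → ℝ) : Prop :=
  (∀ n, 0 ≤ a n) ∧ ∀ x : ℝ, 0 < x → Summable fun n : ℕ => a n * x ^ n

/-- The summands of `Σ aₙ xⁿ` concentrate superpolynomially near `n ≈ f(x)` with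
window term `C x^{-ν}`. -/
def SuperConc (a : ℕ → ℝ) (f : ℝ → ℝ) (C ν : ℝ) : Prop :=
  ∀ p : ℝ, 0 < p →
    ((fun x : ℝ => sumLE a x (f x * (1 - C * x ^ (-ν))) / Iser a x)
        =o[atTop] fun x : ℝ => x ^ (-p)) ∧
    ((fun x : ℝ => sumGE a x (f x * (1 + C * x ^ (-ν))) / Iser a x)
        =o[atTop] fun x : ℝ => x ^ (-p))

/-- The summands of `Σ aₙ xⁿ` concentrate exponentially near `n ≈ f(x)` with
window term `C x^{-ν}` and parameters `(α, β)`. -/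
def ExpConc (a : ℕ → ℝ) (f : ℝ → ℝ) (C ν α β : ℝ) : Prop :=
  ((fun x : ℝ => sumLE a x (f x * (1 - C * x ^ (-ν))) / Iser a x)
      =O[atTop] fun x : ℝ => Real.exp (-α * x ^ β)) ∧
  ((fun x : ℝ => sumGE a x (f x * (1 + C * x ^ (-ν))) / Iser a x)
      =O[atTop] fun x : ℝ => Real.exp (-α * x ^ β))

/-- A real sequence is subpolynomial if `bₙ / n^p → 0` for every `p > 0`. -/
def Subpoly (b : ℕ → ℝ) : Prop :=
  ∀ p : ℝ, 0 < p → Tendsto (fun n : ℕ => b n / (n : ℝ) ^ p) atTop (nhds 0)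

/-
The coefficients `bₙ` grow at most linearly, so the claim reduces to bounding the weighted sums
`Σ (1 + n) aₙ xⁿ` over the head and the tail. On the head `n ≤ f(x)`, so the weight is at most
polynomial in `x`, and a polynomial factor is absorbed by lowering `α` to `α'`. On the tail the
weight is unbounded; there `(1 + n) ≤ ε⁻¹ (1 + ε)ⁿ` moves the weight into the evaluation point
`y = x (1 + ε)` with `ε = x^{-(deg f + 1)}`. The concentration at `y` controls the tail beyond
`f(y)`, the indices between `f(x)` and `f(y)` carry a polynomial weight, and `I(y) = O(I(x))`
because `(1 + ε)^{f(y)}` stays bounded while the tail at `y` is at most half of `I(y)`.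
-/

open Real Topology

theorem Subpoly.exists_abs_le_mul_one_add {b : ℕ → ℝ} (hb : Subpoly b) :
    ∃ B, ∀ n : ℕ, |b n| ≤ B * (1 + n) := by
  have hlin : b =o[atTop] fun n : ℕ => (n : ℝ) := by
    refine (isLittleO_iff_tendsto' ?_).2 ?_
    · filter_upwards [eventually_ne_atTop 0] with n hn h
      exact absurd h (Nat.cast_ne_zero.2 hn)
    · simpa only [rpow_one] using hb 1 one_pos
  have hone : (fun n : ℕ => (n : ℝ)) =O[atTop] fun n : ℕ => 1 + (n : ℝ) :=
    IsBigO.of_bound 1 (Eventually.of_forall fun n => by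
      rw [one_mul, Real.norm_natCast, Real.norm_of_nonneg (by positivity)]
      exact le_add_of_nonneg_left zero_le_one)
  have hb' := hlin.isBigO.trans hone
  rw [← Nat.cofinite_eq_atTop, isBigO_cofinite_iff fun n h => absurd h (by positivity)] at hb'
  obtain ⟨B, hB⟩ := hb'
  refine ⟨B, fun n => ?_⟩
  simpa only [Real.norm_eq_abs, abs_of_pos (by positivity : (0 : ℝ) < 1 + n)] using hB n

theorem Summable.ite_zero {f : ℕ → ℝ} (hf : Summable f) (p : ℕ → Prop) [DecidablePred p] :
    Summable fun n => if p n then f n else 0 :=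
  (hf.indicator {n | p n}).congr fun n => by by_cases h : p n <;> simp [h]

theorem one_add_natCast_le_inv_mul_one_add_pow {ε : ℝ} (hε0 : 0 < ε) (hε1 : ε ≤ 1) (n : ℕ) :
    1 + (n : ℝ) ≤ ε⁻¹ * (1 + ε) ^ n := by
  rw [le_inv_mul_iff₀ hε0]
  nlinarith [one_add_mul_le_pow (by linarith : (-2 : ℝ) ≤ ε) n]

theorem natCast_add_one_le_of_lt_floor {n : ℕ} {s : ℝ} (h : (n : ℤ) < ⌊s⌋) : (n : ℝ) + 1 ≤ s := by
  exact_mod_cast Int.le_floor.1 (Int.add_one_le_iff.2 h)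

theorem isLittleO_pow_mul_exp_neg_mul_rpow {α α' β : ℝ} (k : ℕ) (hβ : 0 < β) (hα : α' < α) :
    (fun x : ℝ => x ^ k * exp (-α * x ^ β)) =o[atTop] fun x => exp (-α' * x ^ β) := by
  rw [isLittleO_iff_tendsto fun x h => absurd h (exp_pos _).ne']
  refine ((tendsto_rpow_mul_exp_neg_mul_atTop_nhds_zero (k / β) (α - α') (sub_pos.2 hα)).comp
    (tendsto_rpow_atTop hβ)).congr' ?_
  filter_upwards [eventually_gt_atTop 0] with x hx
  rw [Function.comp_apply, ← rpow_mul hx.le, mul_div_cancel₀ _ hβ.ne', rpow_natCast, mul_div_assoc,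
    ← exp_sub]
  ring_nf

theorem Polynomial.isBigO_eval_mul_of_tendsto (f : ℝ[X]) {h : ℝ → ℝ} {l : ℝ}
    (hh : Tendsto h atTop (𝓝 l)) :
    (fun x => f.eval x * h x) =O[atTop] fun x => x ^ f.natDegree := by
  have hf : (fun x => f.eval x) =O[atTop] fun x => x ^ f.natDegree := by
    simpa using isBigO_atTop_of_degree_le f (X ^ f.natDegree) (by simp [degree_le_natDegree])
  simpa using hf.mul (hh.isBigO_one ℝ)

namespace AbsMono

variable {a b : ℕ → ℝ} {x B : ℝ} {g : ℝ → ℝ} {d : ℕ} {α α' β : ℝ}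

theorem mul_pow_nonneg (ha : AbsMono a) (hx : 0 ≤ x) (n : ℕ) : 0 ≤ a n * x ^ n :=
  mul_nonneg (ha.1 n) (pow_nonneg hx n)

theorem summable_ite (ha : AbsMono a) (hx : 0 < x) (p : ℕ → Prop) [DecidablePred p] :
    Summable fun n => if p n then a n * x ^ n else 0 :=
  (ha.2 x hx).ite_zero p

theorem summable_one_add_mul (ha : AbsMono a) (hx : 0 < x) :
    Summable fun n : ℕ => (1 + (n : ℝ)) * (a n * x ^ n) := by
  refine Summable.of_nonneg_of_le (fun n => ?_) (fun n => ?_) (ha.2 (2 * x) (by positivity))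
  · have := ha.mul_pow_nonneg hx.le n
    positivity
  · have h2n : 1 + (n : ℝ) ≤ 2 ^ n := by
      rw [add_comm]
      exact_mod_cast Nat.lt_two_pow_self
    calc (1 + (n : ℝ)) * (a n * x ^ n) ≤ 2 ^ n * (a n * x ^ n) :=
          mul_le_mul_of_nonneg_right h2n (ha.mul_pow_nonneg hx.le n)
      _ = a n * (2 * x) ^ n := by ring

theorem sumLE_nonneg (ha : AbsMono a) (hx : 0 ≤ x) (t : ℝ) : 0 ≤ sumLE a x t :=
  tsum_nonneg fun n => by split_ifs; exacts [ha.mul_pow_nonneg hx n, le_rfl]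

theorem sumGE_nonneg (ha : AbsMono a) (hx : 0 ≤ x) (t : ℝ) : 0 ≤ sumGE a x t :=
  tsum_nonneg fun n => by split_ifs; exacts [ha.mul_pow_nonneg hx n, le_rfl]

theorem Iser_nonneg (ha : AbsMono a) (hx : 0 ≤ x) : 0 ≤ Iser a x :=
  tsum_nonneg (ha.mul_pow_nonneg hx)

theorem Iser_pos (ha : AbsMono a) (hne : ∃ n, a n ≠ 0) (hx : 0 < x) : 0 < Iser a x := by
  obtain ⟨m, hm⟩ := hne
  exact (mul_pos ((ha.1 m).lt_of_ne' hm) (pow_pos hx m)).trans_le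
    ((ha.2 x hx).le_tsum m fun n _ => ha.mul_pow_nonneg hx.le n)

theorem norm_tsum_ite_mul_le (ha : AbsMono a) (hB : ∀ n, |b n| ≤ B * (1 + n))
    (hx : 0 < x) (p : ℕ → Prop) [DecidablePred p] :
    ‖∑' n, if p n then b n * a n * x ^ n else 0‖ ≤
      B * ∑' n, if p n then (1 + (n : ℝ)) * (a n * x ^ n) else 0 := by
  refine tsum_of_norm_bounded (((ha.summable_one_add_mul hx).ite_zero p).hasSum.mul_left B)
    fun n => ?_
  have hxn := ha.mul_pow_nonneg hx.le n
  split_ifs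
  · rw [mul_assoc, norm_mul, Real.norm_of_nonneg hxn, Real.norm_eq_abs, ← mul_assoc B]
    exact mul_le_mul_of_nonneg_right (hB n) hxn
  · simp

theorem tsum_ite_le_floor_one_add_mul_le (ha : AbsMono a) (hx : 0 < x) (t : ℝ) :
    ∑' n : ℕ, (if (n : ℤ) ≤ ⌊t⌋ then (1 + (n : ℝ)) * (a n * x ^ n) else 0) ≤
      |1 + t| * sumLE a x t := by
  rw [sumLE, ← tsum_mul_left]
  refine Summable.tsum_le_tsum (fun n => ?_) ((ha.summable_one_add_mul hx).ite_zero _)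
    ((ha.summable_ite hx _).mul_left _)
  split_ifs with h
  · have hnt : (n : ℝ) ≤ t := by exact_mod_cast Int.le_floor.1 h
    exact mul_le_mul_of_nonneg_right (((add_le_add_iff_left 1).2 hnt).trans (le_abs_self _))
      (ha.mul_pow_nonneg hx.le n)
  · simp

theorem tsum_ite_floor_le_one_add_mul_le (ha : AbsMono a) (hx : 0 < x) {ε : ℝ} (hε0 : 0 < ε)
    (hε1 : ε ≤ 1) (t s : ℝ) :
    ∑' n : ℕ, (if ⌊t⌋ ≤ (n : ℤ) then (1 + (n : ℝ)) * (a n * x ^ n) else 0) ≤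
      |s| * sumGE a x t + ε⁻¹ * sumGE a (x * (1 + ε)) s := by
  have hy : 0 < x * (1 + ε) := by positivity
  have hsx := (ha.summable_ite hx fun n => ⌊t⌋ ≤ (n : ℤ)).mul_left |s|
  have hsy := (ha.summable_ite hy fun n => ⌊s⌋ ≤ (n : ℤ)).mul_left ε⁻¹
  rw [sumGE, sumGE, ← tsum_mul_left, ← tsum_mul_left, ← hsx.tsum_add hsy]
  refine Summable.tsum_le_tsum (fun n => ?_) ((ha.summable_one_add_mul hx).ite_zero _)
    (hsx.add hsy)
  have hxn := ha.mul_pow_nonneg hx.le n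
  have hyn := ha.mul_pow_nonneg hy.le n
  have hweight : (1 + (n : ℝ)) * (a n * x ^ n) ≤ ε⁻¹ * (a n * (x * (1 + ε)) ^ n) :=
    calc (1 + (n : ℝ)) * (a n * x ^ n) ≤ (ε⁻¹ * (1 + ε) ^ n) * (a n * x ^ n) :=
          mul_le_mul_of_nonneg_right (one_add_natCast_le_inv_mul_one_add_pow hε0 hε1 n) hxn
      _ = ε⁻¹ * (a n * (x * (1 + ε)) ^ n) := by rw [mul_pow]; ring
  split_ifs with ht hs hs
  · nlinarith [abs_nonneg s]
  · have hns := natCast_add_one_le_of_lt_floor (not_le.1 hs)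
    nlinarith [le_abs_self s]
  · positivity
  · simp

theorem Iser_mul_one_add_le (ha : AbsMono a) (hx : 0 < x) {ε : ℝ} (hε : 0 ≤ ε) (s : ℝ) :
    Iser a (x * (1 + ε)) ≤ exp (ε * |s|) * Iser a x + sumGE a (x * (1 + ε)) s := by
  have hy : 0 < x * (1 + ε) := by positivity
  have hsx := (ha.2 x hx).mul_left (exp (ε * |s|))
  have hsy := ha.summable_ite hy fun n => ⌊s⌋ ≤ (n : ℤ)
  rw [Iser, Iser, sumGE, ← tsum_mul_left, ← hsx.tsum_add hsy]
  refine Summable.tsum_le_tsum (fun n => ?_) (ha.2 _ hy) (hsx.add hsy)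
  have hxn := ha.mul_pow_nonneg hx.le n
  split_ifs with hs
  · exact le_add_of_nonneg_left (mul_nonneg (exp_pos _).le hxn)
  · have hns : (n : ℝ) ≤ |s| := by
      linarith [natCast_add_one_le_of_lt_floor (not_le.1 hs), le_abs_self s]
    have hpow : (1 + ε) ^ n ≤ exp (ε * |s|) :=
      calc (1 + ε) ^ n ≤ exp ε ^ n :=
            pow_le_pow_left₀ (by linarith) (by linarith [add_one_le_exp ε]) n
        _ = exp (n * ε) := (exp_nat_mul ε n).symm
        _ ≤ exp (ε * |s|) := exp_le_exp.2 (by nlinarith)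
    calc a n * (x * (1 + ε)) ^ n = (1 + ε) ^ n * (a n * x ^ n) := by rw [mul_pow]; ring
      _ ≤ exp (ε * |s|) * (a n * x ^ n) + 0 := by
          rw [add_zero]
          exact mul_le_mul_of_nonneg_right hpow hxn

theorem norm_sumGE_mul_div_Iser_le (ha : AbsMono a) (hne : ∃ n, a n ≠ 0)
    (hB : ∀ n, |b n| ≤ B * (1 + n)) (hx : 0 < x) {ε : ℝ} (hε0 : 0 < ε) (hε1 : ε ≤ 1)
    {t s K : ℝ} (hK : ε * |s| ≤ K)
    (hhalf : sumGE a (x * (1 + ε)) s / Iser a (x * (1 + ε)) ≤ 1 / 2) :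
    ‖sumGE (fun n => b n * a n) x t / Iser a x‖ ≤ B * max K (2 * exp K) *
      (ε⁻¹ * (sumGE a x t / Iser a x + sumGE a (x * (1 + ε)) s / Iser a (x * (1 + ε)))) := by
  set y := x * (1 + ε)
  have hI := ha.Iser_pos hne hx
  have hIy := ha.Iser_pos hne (show 0 < y by positivity)
  have hB0 : 0 ≤ B := by simpa using (abs_nonneg _).trans (hB 0)
  set Tx := sumGE a x t / Iser a x
  set Ty := sumGE a y s / Iser a y
  have hTx : 0 ≤ Tx := div_nonneg (ha.sumGE_nonneg hx.le t) hI.le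
  have hTy : 0 ≤ Ty := div_nonneg (ha.sumGE_nonneg (by positivity) s) hIy.le
  have hIy_le : Iser a y ≤ 2 * exp K * Iser a x := by
    have hsplit := ha.Iser_mul_one_add_le hx hε0.le s
    have htail : sumGE a y s ≤ Iser a y / 2 := by
      rw [div_le_iff₀ hIy] at hhalf
      linarith
    have hexp : exp (ε * |s|) ≤ exp K := exp_le_exp.2 hK
    nlinarith
  have hs : |s| ≤ K * ε⁻¹ := by
    rw [le_mul_inv_iff₀ hε0]
    linarith
  have hnum : ‖sumGE (fun n => b n * a n) x t‖ ≤ B * (|s| * sumGE a x t + ε⁻¹ * sumGE a y s) :=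
    (ha.norm_tsum_ite_mul_le hB hx _).trans
      (mul_le_mul_of_nonneg_left (ha.tsum_ite_floor_le_one_add_mul_le hx hε0 hε1 t s) hB0)
  rw [norm_div, Real.norm_of_nonneg hI.le, div_le_iff₀ hI]
  calc ‖sumGE (fun n => b n * a n) x t‖
      ≤ B * (|s| * sumGE a x t + ε⁻¹ * sumGE a y s) := hnum
    _ ≤ B * (K * ε⁻¹ * (Tx * Iser a x) + ε⁻¹ * (Ty * (2 * exp K * Iser a x))) := by
        rw [div_mul_cancel₀ _ hI.ne', ← div_mul_cancel₀ (sumGE a y s) hIy.ne']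
        gcongr
        exact ha.sumGE_nonneg hx.le t
    _ = B * (ε⁻¹ * Iser a x) * (K * Tx + 2 * exp K * Ty) := by ring
    _ ≤ B * (ε⁻¹ * Iser a x) * (max K (2 * exp K) * Tx + max K (2 * exp K) * Ty) := by
        gcongr
        exacts [le_max_left _ _, le_max_right _ _]
    _ = B * max K (2 * exp K) * (ε⁻¹ * (Tx + Ty)) * Iser a x := by ring

theorem isBigO_sumLE_mul_div_Iser (ha : AbsMono a) (hB : ∀ n, |b n| ≤ B * (1 + n))
    (hg : g =O[atTop] fun x => x ^ d) (hβ : 0 < β) (hα' : α' < α)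
    (hconc : (fun x => sumLE a x (g x) / Iser a x) =O[atTop] fun x => exp (-α * x ^ β)) :
    (fun x => sumLE (fun n => b n * a n) x (g x) / Iser a x) =O[atTop]
      fun x => exp (-α' * x ^ β) := by
  have hone : (fun _ => (1 : ℝ)) =O[atTop] fun x : ℝ => x ^ d :=
    IsBigO.of_bound 1 <| by
      filter_upwards [eventually_ge_atTop 1] with x hx
      rw [one_mul, norm_one, Real.norm_of_nonneg (by positivity)]
      exact one_le_pow₀ hx
  refine (IsBigO.of_bound B ?_).trans (((hone.add hg).mul hconc).trans
    (isLittleO_pow_mul_exp_neg_mul_rpow d hβ hα').isBigO)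
  filter_upwards [eventually_gt_atTop 0] with x hx
  have hB0 : 0 ≤ B := by simpa using (abs_nonneg _).trans (hB 0)
  have hnum : ‖sumLE (fun n => b n * a n) x (g x)‖ ≤ B * (|1 + g x| * sumLE a x (g x)) :=
    (ha.norm_tsum_ite_mul_le hB hx _).trans
      (mul_le_mul_of_nonneg_left (ha.tsum_ite_le_floor_one_add_mul_le hx _) hB0)
  rw [norm_div, norm_mul, norm_div, Real.norm_of_nonneg (ha.sumLE_nonneg hx.le _),
    Real.norm_eq_abs, mul_div_assoc', mul_div_assoc']
  exact div_le_div_of_nonneg_right hnum (norm_nonneg _)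

theorem isBigO_sumGE_mul_div_Iser (ha : AbsMono a) (hne : ∃ n, a n ≠ 0)
    (hB : ∀ n, |b n| ≤ B * (1 + n)) (hg : g =O[atTop] fun x => x ^ d) (hα : 0 < α)
    (hβ : 0 < β) (hα' : α' < α)
    (hconc : (fun x => sumGE a x (g x) / Iser a x) =O[atTop] fun x => exp (-α * x ^ β)) :
    (fun x => sumGE (fun n => b n * a n) x (g x) / Iser a x) =O[atTop]
      fun x => exp (-α' * x ^ β) := by
  set T := fun x => sumGE a x (g x) / Iser a x
  set ε : ℝ → ℝ := fun x => (x ^ (d + 1))⁻¹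
  set y : ℝ → ℝ := fun x => x * (1 + ε x)
  have hε : ∀ᶠ x in atTop, 0 < ε x ∧ ε x ≤ 1 := by
    filter_upwards [eventually_ge_atTop 1] with x hx
    exact ⟨by positivity, inv_le_one_of_one_le₀ (one_le_pow₀ hx)⟩
  have hyx : ∀ᶠ x in atTop, x ≤ y x ∧ y x ≤ 2 * x := by
    filter_upwards [eventually_ge_atTop 1, hε] with x hx hεx
    constructor <;> nlinarith [hεx.1, hεx.2]
  have hy : Tendsto y atTop atTop := tendsto_atTop_mono' _ (hyx.mono fun _ h => h.1) tendsto_id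
  have hTy : (fun x => T (y x)) =O[atTop] fun x => exp (-α * x ^ β) := by
    refine (hconc.comp_tendsto hy).trans (IsBigO.of_bound 1 ?_)
    filter_upwards [eventually_gt_atTop 0, hyx] with x hx hyx
    rw [Function.comp_apply, one_mul, Real.norm_of_nonneg (exp_pos _).le,
      Real.norm_of_nonneg (exp_pos _).le, exp_le_exp, neg_mul, neg_mul, neg_le_neg_iff]
    exact mul_le_mul_of_nonneg_left (rpow_le_rpow hx.le hyx.1 hβ.le) hα.le
  have hhalf : ∀ᶠ x in atTop, T (y x) ≤ 1 / 2 := by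
    have hexp : Tendsto (fun x => exp (-α * x ^ β)) atTop (𝓝 0) := by
      simpa only [neg_mul, Function.comp_def] using
        tendsto_exp_neg_atTop_nhds_zero.comp ((tendsto_rpow_atTop hβ).const_mul_atTop hα)
    exact hy.eventually ((hconc.trans_tendsto hexp).eventually (ge_mem_nhds (by norm_num)))
  obtain ⟨c, hc0, hc⟩ := hg.exists_pos
  have hεg : ∀ᶠ x in atTop, ε x * |g (y x)| ≤ c * 2 ^ d := by
    filter_upwards [hy.eventually hc.bound, hyx, eventually_ge_atTop 1] with x hcx hyx hx
    rw [← Real.norm_eq_abs]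
    calc ε x * ‖g (y x)‖ ≤ (x ^ (d + 1))⁻¹ * (c * (2 * x) ^ d) := by
          gcongr
          refine hcx.trans (mul_le_mul_of_nonneg_left ?_ hc0.le)
          rw [Real.norm_of_nonneg (pow_nonneg (by linarith) d)]
          exact pow_le_pow_left₀ (by linarith) hyx.2 d
      _ = c * 2 ^ d * x⁻¹ := by
          field_simp
          ring
      _ ≤ c * 2 ^ d := mul_le_of_le_one_right (by positivity) (inv_le_one_of_one_le₀ hx)
  refine (IsBigO.of_bound (B * max (c * 2 ^ d) (2 * exp (c * 2 ^ d))) ?_).trans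
    (((isBigO_refl (fun x : ℝ => x ^ (d + 1)) atTop).mul (hconc.add hTy)).trans
      (isLittleO_pow_mul_exp_neg_mul_rpow (d + 1) hβ hα').isBigO)
  have hT : ∀ z, 0 < z → 0 ≤ T z := fun z hz =>
    div_nonneg (ha.sumGE_nonneg hz.le _) (ha.Iser_nonneg hz.le)
  filter_upwards [eventually_gt_atTop 0, hε, hyx, hεg, hhalf] with x hx hεx hyx hεg hhalf
  refine (ha.norm_sumGE_mul_div_Iser_le hne hB hx hεx.1 hεx.2 hεg hhalf).trans_eq ?_
  rw [inv_inv, Real.norm_of_nonneg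
    (mul_nonneg (by positivity) (add_nonneg (hT x hx) (hT (y x) (hx.trans_le hyx.1))))]

end AbsMono

theorem stmt10_general (a b : ℕ → ℝ) (f : Polynomial ℝ) (C ν α β : ℝ)
    (hν : 0 < ν) (hα : 0 < α) (hβ : 0 < β)
    (ha : AbsMono a) (hne : ∃ n, a n ≠ 0)
    (hconc : ExpConc a (fun x => f.eval x) C ν α β) (hb : Subpoly b) :
    ∀ α' : ℝ, 0 < α' → α' < α →
      ((fun x : ℝ =>
          sumLE (fun n => b n * a n) x (f.eval x * (1 - C * x ^ (-ν))) / Iser a x)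
        =O[atTop] fun x : ℝ => Real.exp (-α' * x ^ β)) ∧
      ((fun x : ℝ =>
          sumGE (fun n => b n * a n) x (f.eval x * (1 + C * x ^ (-ν))) / Iser a x)
        =O[atTop] fun x : ℝ => Real.exp (-α' * x ^ β)) := by
  intro α' _ hα'
  obtain ⟨B, hB⟩ := hb.exists_abs_le_mul_one_add
  have hwindow : Tendsto (fun x : ℝ => C * x ^ (-ν)) atTop (𝓝 0) := by
    simpa using (tendsto_rpow_neg_atTop hν).const_mul C
  exact ⟨ha.isBigO_sumLE_mul_div_Iser hB
      (f.isBigO_eval_mul_of_tendsto (tendsto_const_nhds.sub hwindow)) hβ hα' hconc.1,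
    ha.isBigO_sumGE_mul_div_Iser hne hB
      (f.isBigO_eval_mul_of_tendsto (tendsto_const_nhds.add hwindow)) hα hβ hα' hconc.2⟩

theorem stmt10 (a b : ℕ → ℝ) (f : Polynomial ℝ) (C ν α β : ℝ)
    (hC : 0 < C) (hν : 0 < ν) (hα : 0 < α) (hβ : 0 < β)
    (ha : AbsMono a) (hne : ∃ n, a n ≠ 0) (hlead : 0 < f.leadingCoeff)
    (hconc : ExpConc a (fun x => f.eval x) C ν α β) (hb : Subpoly b) :
    ∀ α' : ℝ, 0 < α' → α' < α →
      ((fun x : ℝ =>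
          sumLE (fun n => b n * a n) x (f.eval x * (1 - C * x ^ (-ν))) / Iser a x)
        =O[atTop] fun x : ℝ => Real.exp (-α' * x ^ β)) ∧
      ((fun x : ℝ =>
          sumGE (fun n => b n * a n) x (f.eval x * (1 + C * x ^ (-ν))) / Iser a x)
        =O[atTop] fun x : ℝ => Real.exp (-α' * x ^ β)) :=
  stmt10_general a b f C ν α β hν hα hβ ha hne hconc hb
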